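/- arXiv:1907.00600 — 2 statements merged into one kernel-verified Lean document; each statement's English description precedes it below -/
import Mathlib

section
/- If L has nonzero torsion (L^i_{jk} ≠ L^i_{kj} for some indices), then the three operators of covariant differentiation of kinds 1, 2, 3 are linearly independent: whenever real constants c₁, c₂, c₃ satisfy c₁ a^i_{j,1|k} + c₂ a^i_{j,2|k} + c₃ a^i_{j,3|k} = 0 for all smooth (1,1)-tensor fields a, then c₁ = c₂ = c₃ = 0. -/
open scoped BigOperators

noncomputable def pd {N : ℕ} (k : Fin N) (f : (Fin N → ℝ) → ℝ) (x : Fin N → ℝ) : ℝ :=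
  fderiv ℝ f x (Pi.single k 1)

/-- If the torsion of `L` is not identically zero, the three operators of
covariant differentiation of kinds 1, 2, 3 are linearly independent. -/
theorem stmt4 {N : ℕ} (L : Fin N → Fin N → Fin N → (Fin N → ℝ) → ℝ)
    (hL : ∀ i j k, ContDiff ℝ (⊤ : ℕ∞) (L i j k))
    (htor : ∃ i j k x, (L i j k x - L i k j x) / 2 ≠ 0)
    (c₁ c₂ c₃ : ℝ)
    (h : ∀ (a : Fin N → Fin N → (Fin N → ℝ) → ℝ), (∀ i j, ContDiff ℝ (⊤ : ℕ∞) (a i j)) →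
      ∀ i j k x,
        c₁ * (pd k (a i j) x + (∑ α, L i α k x * a α j x) - (∑ α, L α j k x * a i α x))
        + c₂ * (pd k (a i j) x + (∑ α, L i k α x * a α j x) - (∑ α, L α k j x * a i α x))
        + c₃ * (pd k (a i j) x + (∑ α, L i α k x * a α j x) - (∑ α, L α k j x * a i α x))
        = 0) :
    c₁ = 0 ∧ c₂ = 0 ∧ c₃ = 0 := by
  obtain ⟨i0, j0, k0, x0, hT⟩ := htor
  have hd : L i0 j0 k0 x0 - L i0 k0 j0 x0 ≠ 0 := fun hh => hT (by rw [hh]; norm_num)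
  -- Step A : c₃ = 0, using the identity tensor
  have hA := h (fun i j _ => if i = j then 1 else 0) (fun i j => contDiff_const) i0 j0 k0 x0
  simp only [pd, fderiv_fun_const, Pi.zero_apply, ContinuousLinearMap.zero_apply,
    mul_ite, mul_one, mul_zero, Finset.sum_ite_eq, Finset.sum_ite_eq',
    Finset.mem_univ, if_true] at hA
  have hc3 : c₃ = 0 := by
    have : c₃ * (L i0 j0 k0 x0 - L i0 k0 j0 x0) = 0 := by linear_combination hA
    rcases mul_eq_zero.mp this with h' | h'
    · exact h'
    · exact absurd h' hd
  -- Step B : c₁ + c₂ + c₃ = 0, using a i j x = x i0, at x = 0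
  have hproj : (fun x : Fin N → ℝ => x i0)
      = ⇑(ContinuousLinearMap.proj (R := ℝ) (φ := fun _ : Fin N => ℝ) i0) := rfl
  have hB := h (fun _ _ x => x i0)
    (fun i j => by rw [hproj]; exact (ContinuousLinearMap.proj i0 :
      (Fin N → ℝ) →L[ℝ] ℝ).contDiff) i0 i0 i0 0
  have hpd : pd i0 (fun x : Fin N → ℝ => x i0) 0 = 1 := by
    rw [pd, hproj, ContinuousLinearMap.fderiv]
    simp
  simp only [hpd, Pi.zero_apply, mul_zero, Finset.sum_const_zero, add_zero, sub_zero] at hB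
  have hc12 : c₁ + c₂ = 0 := by
    rw [hc3] at hB; linarith [hB]
  have hc2 : c₂ = -c₁ := by linarith
  -- Step C : c₁ = 0
  have hc1 : c₁ = 0 := by
    by_cases hij : i0 = j0
    · -- use a = E_{k0 i0}, evaluate at (k0, i0, k0)
      subst hij
      have hC := h (fun i j _ => if i = k0 ∧ j = i0 then 1 else 0)
        (fun i j => contDiff_const) k0 i0 k0 x0
      simp only [pd, fderiv_fun_const, Pi.zero_apply, ContinuousLinearMap.zero_apply,
        mul_ite, mul_one, mul_zero, and_true, true_and, Finset.sum_ite_eq, Finset.sum_ite_eq',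
        Finset.mem_univ, if_true] at hC
      rw [hc2, hc3] at hC
      have : (-c₁) * (L i0 i0 k0 x0 - L i0 k0 i0 x0) = 0 := by linear_combination hC
      rcases mul_eq_zero.mp this with h' | h'
      · linarith
      · exact absurd h' hd
    · -- use a = E_{j0 j0}, evaluate at (i0, j0, k0)
      have hC := h (fun i j _ => if i = j0 ∧ j = j0 then 1 else 0)
        (fun i j => contDiff_const) i0 j0 k0 x0
      simp only [pd, fderiv_fun_const, Pi.zero_apply, ContinuousLinearMap.zero_apply,
        mul_ite, mul_one, mul_zero, and_true, true_and, hij, false_and, if_false,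
        Finset.sum_ite_eq, Finset.sum_ite_eq', Finset.sum_const_zero,
        Finset.mem_univ, if_true] at hC
      rw [hc2, hc3] at hC
      have : c₁ * (L i0 j0 k0 x0 - L i0 k0 j0 x0) = 0 := by linear_combination hC
      rcases mul_eq_zero.mp this with h' | h'
      · exact h'
      · exact absurd h' hd
  exact ⟨hc1, by linarith, hc3⟩
end

section
/- The mixed Ricci-type identity combining the first and second kind covariant derivatives holds: a^i_{j,1|m,2|n} − a^i_{j,1|n,2|m} = −2 T^α_{jm} a^i_{α|n} + 2 T^α_{jn} a^i_{α|m} + 2 T^α_{mn} a^i_{j|α} − 2 T^i_{αn} a^α_{j|m} + 2 T^i_{αm} a^α_{j|n} + a^α_j (R^i_{αmn} + T^i_{αm|n} − T^i_{αn|m} − T^β_{αm} T^i_{βn} + T^β_{αn} T^i_{βm} + 2 T^i_{αβ} T^β_{mn}) − a^i_α (R^α_{jmn} + T^α_{jm|n} − T^α_{jn|m} − T^β_{jm} T^α_{βn} + T^β_{jn} T^α_{βm} + 2 T^α_{jβ} T^β_{mn}). -/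
open scoped BigOperators

/-- Symmetric part of the connection. -/
noncomputable def symP {N : ℕ} (L : Fin N → Fin N → Fin N → (Fin N → ℝ) → ℝ)
    (i j k : Fin N) : (Fin N → ℝ) → ℝ := fun x => (L i j k x + L i k j x) / 2

/-- Anti-symmetric part (half the torsion tensor). -/
noncomputable def tor {N : ℕ} (L : Fin N → Fin N → Fin N → (Fin N → ℝ) → ℝ)
    (i j k : Fin N) : (Fin N → ℝ) → ℝ := fun x => (L i j k x - L i k j x) / 2

/-- Covariant derivative of a (1,1)-tensor w.r.t. a symmetric connection Γ. -/
noncomputable def cd {N : ℕ} (Γ : Fin N → Fin N → Fin N → (Fin N → ℝ) → ℝ)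
    (a : Fin N → Fin N → (Fin N → ℝ) → ℝ) (i j k : Fin N) : (Fin N → ℝ) → ℝ :=
  fun x => pd k (a i j) x + (∑ α, Γ i α k x * a α j x) - (∑ α, Γ α j k x * a i α x)

/-- Covariant derivative of a (1,2)-tensor w.r.t. a symmetric connection Γ. -/
noncomputable def cd' {N : ℕ} (Γ : Fin N → Fin N → Fin N → (Fin N → ℝ) → ℝ)
    (b : Fin N → Fin N → Fin N → (Fin N → ℝ) → ℝ) (i j m n : Fin N) : (Fin N → ℝ) → ℝ :=
  fun x => pd n (b i j m) x + (∑ α, Γ i α n x * b α j m x)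
    - (∑ α, Γ α j n x * b i α m x) - (∑ α, Γ α m n x * b i j α x)

/-- Curvature tensor of a symmetric connection Γ. -/
noncomputable def curv {N : ℕ} (Γ : Fin N → Fin N → Fin N → (Fin N → ℝ) → ℝ)
    (i j m n : Fin N) : (Fin N → ℝ) → ℝ :=
  fun x => pd n (Γ i j m) x - pd m (Γ i j n) x
    + (∑ α, Γ α j m x * Γ i α n x) - (∑ α, Γ α j n x * Γ i α m x)

/-- First kind covariant derivative of a (1,1)-tensor. -/
noncomputable def d1 {N : ℕ} (L : Fin N → Fin N → Fin N → (Fin N → ℝ) → ℝ)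
    (a : Fin N → Fin N → (Fin N → ℝ) → ℝ) (i j k : Fin N) : (Fin N → ℝ) → ℝ :=
  fun x => pd k (a i j) x + (∑ α, L i α k x * a α j x) - (∑ α, L α j k x * a i α x)

/-- Second kind covariant derivative of a (1,2)-tensor. -/
noncomputable def d2' {N : ℕ} (L : Fin N → Fin N → Fin N → (Fin N → ℝ) → ℝ)
    (b : Fin N → Fin N → Fin N → (Fin N → ℝ) → ℝ) (i j m n : Fin N) : (Fin N → ℝ) → ℝ :=
  fun x => pd n (b i j m) x + (∑ α, L i n α x * b α j m x)
    - (∑ α, L α n j x * b i α m x) - (∑ α, L α n m x * b i j α x)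

section Infra
variable {N : ℕ}

lemma contDiff_pd {f : (Fin N → ℝ) → ℝ} (hf : ContDiff ℝ (⊤ : ℕ∞) f) (k : Fin N) :
    ContDiff ℝ (⊤ : ℕ∞) (pd k f) :=
  (hf.fderiv_right (by simp)).clm_apply contDiff_const

lemma pd_add (k : Fin N) {f g : (Fin N → ℝ) → ℝ} {x} (hf : DifferentiableAt ℝ f x)
    (hg : DifferentiableAt ℝ g x) :
    pd k (fun y => f y + g y) x = pd k f x + pd k g x := by
  simp [pd, fderiv_fun_add hf hg]

lemma pd_sub (k : Fin N) {f g : (Fin N → ℝ) → ℝ} {x} (hf : DifferentiableAt ℝ f x)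
    (hg : DifferentiableAt ℝ g x) :
    pd k (fun y => f y - g y) x = pd k f x - pd k g x := by
  simp [pd, fderiv_fun_sub hf hg]

lemma pd_mul (k : Fin N) {f g : (Fin N → ℝ) → ℝ} {x} (hf : DifferentiableAt ℝ f x)
    (hg : DifferentiableAt ℝ g x) :
    pd k (fun y => f y * g y) x = pd k f x * g x + f x * pd k g x := by
  simp [pd, fderiv_fun_mul hf hg]; ring

lemma pd_sum (k : Fin N) {f : Fin N → (Fin N → ℝ) → ℝ} {x}
    (hf : ∀ α, DifferentiableAt ℝ (f α) x) :
    pd k (fun y => ∑ α, f α y) x = ∑ α, pd k (f α) x := by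
  simp [pd, fderiv_fun_sum (fun α _ => hf α)]

lemma pd_comm {f : (Fin N → ℝ) → ℝ} (hf : ContDiff ℝ (⊤ : ℕ∞) f) (m n : Fin N) (x : Fin N → ℝ) :
    pd n (pd m f) x = pd m (pd n f) x := by
  have h1 : ∀ y, HasFDerivAt f (fderiv ℝ f y) y := fun y =>
    (hf.differentiable (by simp) y).hasFDerivAt
  have h2 : HasFDerivAt (fderiv ℝ f) (fderiv ℝ (fderiv ℝ f) x) x :=
    (((hf.fderiv_right (m := 1) (WithTop.coe_le_coe.mpr le_top)).differentiable (by simp)) x).hasFDerivAt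
  have hs := second_derivative_symmetric h1 h2
  have e1 : ∀ v w : Fin N → ℝ,
      fderiv ℝ (fun y => fderiv ℝ f y v) x w = fderiv ℝ (fderiv ℝ f) x w v := by
    intro v w
    have h3 : HasFDerivAt (fun y => fderiv ℝ f y v)
        ((ContinuousLinearMap.apply ℝ ℝ v).comp (fderiv ℝ (fderiv ℝ f) x)) x :=
      (ContinuousLinearMap.apply ℝ ℝ v).hasFDerivAt.comp x h2
    simp [h3.fderiv]
  unfold pd
  rw [e1, e1, hs]

end Infra

section Smooth
variable {N : ℕ} {L : Fin N → Fin N → Fin N → (Fin N → ℝ) → ℝ}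
  {Γ : Fin N → Fin N → Fin N → (Fin N → ℝ) → ℝ}
  {a : Fin N → Fin N → (Fin N → ℝ) → ℝ}

/-- The torsion correction term in the decomposition of `d1`. -/
noncomputable def tt {N : ℕ} (T : Fin N → Fin N → Fin N → (Fin N → ℝ) → ℝ)
    (a : Fin N → Fin N → (Fin N → ℝ) → ℝ) (i j m : Fin N) : (Fin N → ℝ) → ℝ :=
  fun x => (∑ α, T i α m x * a α j x) - ∑ α, T α j m x * a i α x

lemma cont_tor (hL : ∀ i j k, ContDiff ℝ (⊤ : ℕ∞) (L i j k)) (i j k : Fin N) :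
    ContDiff ℝ (⊤ : ℕ∞) (tor L i j k) := by
  unfold tor; exact ((hL i j k).sub (hL i k j)).div_const 2

lemma cont_symP (hL : ∀ i j k, ContDiff ℝ (⊤ : ℕ∞) (L i j k)) (i j k : Fin N) :
    ContDiff ℝ (⊤ : ℕ∞) (symP L i j k) := by
  unfold symP; exact ((hL i j k).add (hL i k j)).div_const 2

lemma cont_cd (hΓ : ∀ i j k, ContDiff ℝ (⊤ : ℕ∞) (Γ i j k)) (ha : ∀ i j, ContDiff ℝ (⊤ : ℕ∞) (a i j))
    (i j k : Fin N) : ContDiff ℝ (⊤ : ℕ∞) (cd Γ a i j k) := by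
  unfold cd
  exact ((contDiff_pd (ha i j) k).add (ContDiff.sum fun α _ => (hΓ i α k).mul (ha α j))).sub
    (ContDiff.sum fun α _ => (hΓ α j k).mul (ha i α))

lemma cont_tt {T : Fin N → Fin N → Fin N → (Fin N → ℝ) → ℝ}
    (hT : ∀ i j k, ContDiff ℝ (⊤ : ℕ∞) (T i j k)) (ha : ∀ i j, ContDiff ℝ (⊤ : ℕ∞) (a i j))
    (i j m : Fin N) : ContDiff ℝ (⊤ : ℕ∞) (tt T a i j m) := by
  unfold tt
  exact (ContDiff.sum fun α _ => (hT i α m).mul (ha α j)).sub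
    (ContDiff.sum fun α _ => (hT α j m).mul (ha i α))

/-- Expansion of `pd` of a `cd`-shaped function. -/
lemma pd_shape {f : (Fin N → ℝ) → ℝ} {u v p q : Fin N → (Fin N → ℝ) → ℝ}
    (hf : ContDiff ℝ (⊤ : ℕ∞) f) (hu : ∀ α, ContDiff ℝ (⊤ : ℕ∞) (u α)) (hv : ∀ α, ContDiff ℝ (⊤ : ℕ∞) (v α))
    (hp : ∀ α, ContDiff ℝ (⊤ : ℕ∞) (p α)) (hq : ∀ α, ContDiff ℝ (⊤ : ℕ∞) (q α)) (n : Fin N)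
    (x : Fin N → ℝ) :
    pd n (fun y => f y + (∑ α, u α y * v α y) - ∑ α, p α y * q α y) x
      = pd n f x + (∑ α, (pd n (u α) x * v α x + u α x * pd n (v α) x))
        - ∑ α, (pd n (p α) x * q α x + p α x * pd n (q α) x) := by
  have d1 : DifferentiableAt ℝ (fun y => f y + ∑ α, u α y * v α y) x :=
    ((hf.differentiable (by simp) x).add
      (Differentiable.fun_sum (fun α _ => ((hu α).mul (hv α)).differentiable (by simp)) x))
  have d2 : DifferentiableAt ℝ (fun y => ∑ α, p α y * q α y) x :=
    Differentiable.fun_sum (fun α _ => ((hp α).mul (hq α)).differentiable (by simp)) x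
  rw [pd_sub n d1 d2,
    pd_add n (hf.differentiable (by simp) x)
      (Differentiable.fun_sum (fun α _ => ((hu α).mul (hv α)).differentiable (by simp)) x),
    pd_sum n (fun α => (((hu α).mul (hv α)).differentiable (by simp) x)),
    pd_sum n (fun α => (((hp α).mul (hq α)).differentiable (by simp) x))]
  rw [Finset.sum_congr rfl (fun α _ => pd_mul n ((hu α).differentiable (by simp) x)
      ((hv α).differentiable (by simp) x)),
    Finset.sum_congr rfl (fun α _ => pd_mul n ((hp α).differentiable (by simp) x)
      ((hq α).differentiable (by simp) x))]

/-- Expansion of `pd` of a `tt`-shaped function. -/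
lemma pd_shape2 {u v p q : Fin N → (Fin N → ℝ) → ℝ}
    (hu : ∀ α, ContDiff ℝ (⊤ : ℕ∞) (u α)) (hv : ∀ α, ContDiff ℝ (⊤ : ℕ∞) (v α))
    (hp : ∀ α, ContDiff ℝ (⊤ : ℕ∞) (p α)) (hq : ∀ α, ContDiff ℝ (⊤ : ℕ∞) (q α)) (n : Fin N)
    (x : Fin N → ℝ) :
    pd n (fun y => (∑ α, u α y * v α y) - ∑ α, p α y * q α y) x
      = (∑ α, (pd n (u α) x * v α x + u α x * pd n (v α) x))
        - ∑ α, (pd n (p α) x * q α x + p α x * pd n (q α) x) := by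
  have d1 : DifferentiableAt ℝ (fun y => ∑ α, u α y * v α y) x :=
    Differentiable.fun_sum (fun α _ => ((hu α).mul (hv α)).differentiable (by simp)) x
  have d2 : DifferentiableAt ℝ (fun y => ∑ α, p α y * q α y) x :=
    Differentiable.fun_sum (fun α _ => ((hp α).mul (hq α)).differentiable (by simp)) x
  rw [pd_sub n d1 d2,
    pd_sum n (fun α => (((hu α).mul (hv α)).differentiable (by simp) x)),
    pd_sum n (fun α => (((hp α).mul (hq α)).differentiable (by simp) x))]
  rw [Finset.sum_congr rfl (fun α _ => pd_mul n ((hu α).differentiable (by simp) x)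
      ((hv α).differentiable (by simp) x)),
    Finset.sum_congr rfl (fun α _ => pd_mul n ((hp α).differentiable (by simp) x)
      ((hq α).differentiable (by simp) x))]

end Smooth

section Decomp
variable {N : ℕ} (L : Fin N → Fin N → Fin N → (Fin N → ℝ) → ℝ)
  (a : Fin N → Fin N → (Fin N → ℝ) → ℝ)
  (b : Fin N → Fin N → Fin N → (Fin N → ℝ) → ℝ)

lemma d1_decomp (i j m : Fin N) (x : Fin N → ℝ) :
    d1 L a i j m x = cd (symP L) a i j m x + tt (tor L) a i j m x := by
  simp only [d1, cd, tt, symP, tor]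
  have h1 : ∑ α, L i α m x * a α j x
      = (∑ α, (L i α m x + L i m α x) / 2 * a α j x)
        + ∑ α, (L i α m x - L i m α x) / 2 * a α j x := by
    rw [← Finset.sum_add_distrib]; exact Finset.sum_congr rfl fun α _ => by ring
  have h2 : ∑ α, L α j m x * a i α x
      = (∑ α, (L α j m x + L α m j x) / 2 * a i α x)
        + ∑ α, (L α j m x - L α m j x) / 2 * a i α x := by
    rw [← Finset.sum_add_distrib]; exact Finset.sum_congr rfl fun α _ => by ring
  rw [h1, h2]; ring

lemma d2'_decomp (i j m n : Fin N) (x : Fin N → ℝ) :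
    d2' L b i j m n x = cd' (symP L) b i j m n x
      - (∑ α, tor L i α n x * b α j m x) + (∑ α, tor L α j n x * b i α m x)
      + ∑ α, tor L α m n x * b i j α x := by
  simp only [d2', cd', symP, tor]
  have h1 : ∑ α, L i n α x * b α j m x
      = (∑ α, (L i α n x + L i n α x) / 2 * b α j m x)
        - ∑ α, (L i α n x - L i n α x) / 2 * b α j m x := by
    rw [← Finset.sum_sub_distrib]; exact Finset.sum_congr rfl fun α _ => by ring
  have h2 : ∑ α, L α n j x * b i α m x
      = (∑ α, (L α j n x + L α n j x) / 2 * b i α m x)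
        - ∑ α, (L α j n x - L α n j x) / 2 * b i α m x := by
    rw [← Finset.sum_sub_distrib]; exact Finset.sum_congr rfl fun α _ => by ring
  have h3 : ∑ α, L α n m x * b i j α x
      = (∑ α, (L α m n x + L α n m x) / 2 * b i j α x)
        - ∑ α, (L α m n x - L α n m x) / 2 * b i j α x := by
    rw [← Finset.sum_sub_distrib]; exact Finset.sum_congr rfl fun α _ => by ring
  rw [h1, h2, h3]; ring

lemma cd'_split (hL : ∀ i j k, ContDiff ℝ (⊤ : ℕ∞) (L i j k)) (ha : ∀ i j, ContDiff ℝ (⊤ : ℕ∞) (a i j))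
    (i j m n : Fin N) (x : Fin N → ℝ) :
    cd' (symP L) (fun p q r => d1 L a p q r) i j m n x
      = cd' (symP L) (fun p q r => cd (symP L) a p q r) i j m n x
        + cd' (symP L) (fun p q r => tt (tor L) a p q r) i j m n x := by
  simp only [cd']
  have hfun : d1 L a i j m = fun y => cd (symP L) a i j m y + tt (tor L) a i j m y :=
    funext fun y => d1_decomp L a i j m y
  rw [hfun, pd_add n ((cont_cd (cont_symP hL) ha i j m).differentiable (by simp) x)
    ((cont_tt (cont_tor hL) ha i j m).differentiable (by simp) x)]
  simp only [d1_decomp]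
  simp only [mul_add, Finset.sum_add_distrib]
  ring

end Decomp

section Ricci
variable {N : ℕ}

lemma sum_comm_congr (f g : Fin N → Fin N → ℝ) (h : ∀ α β, f α β = g β α) :
    ∑ α, ∑ β, f α β = ∑ α, ∑ β, g α β := by
  rw [Finset.sum_comm]
  exact Finset.sum_congr rfl fun β _ => Finset.sum_congr rfl fun α _ => h α β

lemma sum_congr' (f g : Fin N → ℝ) (h : ∀ α, f α = g α) : ∑ α, f α = ∑ α, g α :=
  Finset.sum_congr rfl fun α _ => h α

lemma ricci (Γ : Fin N → Fin N → Fin N → (Fin N → ℝ) → ℝ)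
    (hΓ : ∀ i j k, ContDiff ℝ (⊤ : ℕ∞) (Γ i j k))
    (hsym : ∀ p q r y, Γ p q r y = Γ p r q y)
    (a : Fin N → Fin N → (Fin N → ℝ) → ℝ) (ha : ∀ i j, ContDiff ℝ (⊤ : ℕ∞) (a i j))
    (i j m n : Fin N) (x : Fin N → ℝ) :
    cd' Γ (fun p q r => cd Γ a p q r) i j m n x
      - cd' Γ (fun p q r => cd Γ a p q r) i j n m x
    = (∑ α, a α j x * curv Γ i α m n x) - ∑ α, a i α x * curv Γ α j m n x := by
  have e : ∀ (m n : Fin N), pd n (cd Γ a i j m) x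
      = pd n (pd m (a i j)) x
        + (∑ α, (pd n (Γ i α m) x * a α j x + Γ i α m x * pd n (a α j) x))
        - ∑ α, (pd n (Γ α j m) x * a i α x + Γ α j m x * pd n (a i α) x) := by
    intro m n
    have : cd Γ a i j m = fun y => pd m (a i j) y
        + (∑ α, Γ i α m y * a α j y) - ∑ α, Γ α j m y * a i α y := rfl
    rw [this]
    exact pd_shape (contDiff_pd (ha i j) m) (fun α => hΓ i α m) (fun α => ha α j)
      (fun α => hΓ α j m) (fun α => ha i α) n x
  simp only [cd']
  rw [e m n, e n m, pd_comm (ha i j) m n x]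
  have hc : ∑ α, Γ α n m x * cd Γ a i j α x = ∑ α, Γ α m n x * cd Γ a i j α x :=
    Finset.sum_congr rfl fun α _ => by rw [hsym]
  rw [hc]
  simp only [cd, curv]
  simp only [mul_add, mul_sub, add_mul, sub_mul, Finset.mul_sum, Finset.sum_mul,
    Finset.sum_add_distrib, Finset.sum_sub_distrib]
  ring_nf
  have h1 : ∑ α, pd n (Γ i α m) x * a α j x = ∑ α, a α j x * pd n (Γ i α m) x :=
    sum_congr' _ _ fun α => mul_comm _ _
  have h2 : ∑ α, pd n (Γ α j m) x * a i α x = ∑ α, a i α x * pd n (Γ α j m) x :=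
    sum_congr' _ _ fun α => mul_comm _ _
  have h3 : ∑ α, pd m (Γ i α n) x * a α j x = ∑ α, a α j x * pd m (Γ i α n) x :=
    sum_congr' _ _ fun α => mul_comm _ _
  have h4 : ∑ α, pd m (Γ α j n) x * a i α x = ∑ α, a i α x * pd m (Γ α j n) x :=
    sum_congr' _ _ fun α => mul_comm _ _
  have s1 : ∑ α, ∑ β, Γ i α n x * Γ α β m x * a β j x
      = ∑ α, ∑ β, a α j x * Γ β α m x * Γ i β n x :=
    sum_comm_congr _ _ fun α β => by ring
  have s2 : ∑ α, ∑ β, Γ i α m x * Γ α β n x * a β j x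
      = ∑ α, ∑ β, a α j x * Γ β α n x * Γ i β m x :=
    sum_comm_congr _ _ fun α β => by ring
  have s3 : ∑ α, ∑ β, Γ α j n x * Γ β α m x * a i β x
      = ∑ α, ∑ β, a i α x * Γ β j n x * Γ α β m x :=
    sum_comm_congr _ _ fun α β => by ring
  have s4 : ∑ α, ∑ β, Γ α j m x * Γ β α n x * a i β x
      = ∑ α, ∑ β, a i α x * Γ β j m x * Γ α β n x :=
    sum_comm_congr _ _ fun α β => by ring
  have s5 : ∑ α, ∑ β, Γ α j m x * Γ i β n x * a β α x
      = ∑ α, ∑ β, Γ i α n x * Γ β j m x * a α β x :=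
    sum_comm_congr _ _ fun α β => by ring
  have s6 : ∑ α, ∑ β, Γ i α m x * Γ β j n x * a α β x
      = ∑ α, ∑ β, Γ α j n x * Γ i β m x * a β α x :=
    sum_comm_congr _ _ fun α β => by ring
  linear_combination h1 - h2 - h3 + h4 + s1 - s2 + s3 - s4 + s5 + s6

end Ricci

section Leibniz
variable {N : ℕ}

lemma leibniz (Γ T : Fin N → Fin N → Fin N → (Fin N → ℝ) → ℝ)
    (hΓ : ∀ i j k, ContDiff ℝ (⊤ : ℕ∞) (Γ i j k)) (hT : ∀ i j k, ContDiff ℝ (⊤ : ℕ∞) (T i j k))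
    (a : Fin N → Fin N → (Fin N → ℝ) → ℝ) (ha : ∀ i j, ContDiff ℝ (⊤ : ℕ∞) (a i j))
    (i j m n : Fin N) (x : Fin N → ℝ) :
    cd' Γ (fun p q r => tt T a p q r) i j m n x
      = (∑ α, cd' Γ T i α m n x * a α j x)
        + (∑ α, T i α m x * cd Γ a α j n x)
        - (∑ α, cd' Γ T α j m n x * a i α x)
        - ∑ α, T α j m x * cd Γ a i α n x := by
  have e : pd n (tt T a i j m) x
      = (∑ α, (pd n (T i α m) x * a α j x + T i α m x * pd n (a α j) x))
        - ∑ α, (pd n (T α j m) x * a i α x + T α j m x * pd n (a i α) x) := by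
    have : tt T a i j m = fun y =>
        (∑ α, T i α m y * a α j y) - ∑ α, T α j m y * a i α y := rfl
    rw [this]
    exact pd_shape2 (fun α => hT i α m) (fun α => ha α j)
      (fun α => hT α j m) (fun α => ha i α) n x
  simp only [cd']
  rw [e]
  simp only [tt, cd, cd']
  simp only [mul_add, mul_sub, add_mul, sub_mul, Finset.mul_sum, Finset.sum_mul,
    Finset.sum_add_distrib, Finset.sum_sub_distrib]
  ring_nf
  have c1 : ∑ α, ∑ β, Γ i α n x * T α β m x * a β j x
      = ∑ α, ∑ β, Γ i β n x * T β α m x * a α j x :=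
    sum_comm_congr _ _ fun α β => by ring
  have c2 : ∑ α, ∑ β, Γ α m n x * T i β α x * a β j x
      = ∑ α, ∑ β, Γ β m n x * T i α β x * a α j x :=
    sum_comm_congr _ _ fun α β => by ring
  have c3 : ∑ α, ∑ β, Γ α j n x * T β α m x * a i β x
      = ∑ α, ∑ β, Γ β j n x * T α β m x * a i α x :=
    sum_comm_congr _ _ fun α β => by ring
  have c4 : ∑ α, ∑ β, Γ α m n x * T β j α x * a i β x
      = ∑ α, ∑ β, Γ β m n x * T α j β x * a i α x :=
    sum_comm_congr _ _ fun α β => by ring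
  have c5 : ∑ α, ∑ β, Γ α j n x * T i β m x * a β α x
      = ∑ α, ∑ β, T i α m x * Γ β j n x * a α β x :=
    sum_comm_congr _ _ fun α β => by ring
  have c6 : ∑ α, ∑ β, Γ i α n x * T β j m x * a α β x
      = ∑ α, ∑ β, T α j m x * Γ i β n x * a β α x :=
    sum_comm_congr _ _ fun α β => by ring
  have c7 : ∑ α, ∑ β, T i α m x * Γ α β n x * a β j x
      = ∑ α, ∑ β, Γ β α n x * T i β m x * a α j x :=
    sum_comm_congr _ _ fun α β => by ring
  have c8 : ∑ α, ∑ β, T α j m x * Γ β α n x * a i β x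
      = ∑ α, ∑ β, Γ α β n x * T β j m x * a i α x :=
    sum_comm_congr _ _ fun α β => by ring
  linear_combination c1 - c2 + c3 + c4 - c5 - c6 - c7 - c8

end Leibniz

theorem stmt11' {N : ℕ} (L : Fin N → Fin N → Fin N → (Fin N → ℝ) → ℝ)
    (hL : ∀ i j k, ContDiff ℝ (⊤ : ℕ∞) (L i j k))
    (a : Fin N → Fin N → (Fin N → ℝ) → ℝ) (ha : ∀ i j, ContDiff ℝ (⊤ : ℕ∞) (a i j))
    (i j m n : Fin N) (x : Fin N → ℝ) :
    d2' L (fun i j m => d1 L a i j m) i j m n x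
      - d2' L (fun i j m => d1 L a i j m) i j n m x
    = -2 * (∑ α, tor L α j m x * cd (symP L) a i α n x)
      + 2 * (∑ α, tor L α j n x * cd (symP L) a i α m x)
      + 2 * (∑ α, tor L α m n x * cd (symP L) a i j α x)
      - 2 * (∑ α, tor L i α n x * cd (symP L) a α j m x)
      + 2 * (∑ α, tor L i α m x * cd (symP L) a α j n x)
      + (∑ α, a α j x *
          (curv (symP L) i α m n x
            + cd' (symP L) (tor L) i α m n x - cd' (symP L) (tor L) i α n m x
            - (∑ β, tor L β α m x * tor L i β n x)
            + (∑ β, tor L β α n x * tor L i β m x)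
            + 2 * (∑ β, tor L i α β x * tor L β m n x)))
      - (∑ α, a i α x *
          (curv (symP L) α j m n x
            + cd' (symP L) (tor L) α j m n x - cd' (symP L) (tor L) α j n m x
            - (∑ β, tor L β j m x * tor L α β n x)
            + (∑ β, tor L β j n x * tor L α β m x)
            + 2 * (∑ β, tor L α j β x * tor L β m n x))) := by
  have hsym : ∀ p q r y, symP L p q r y = symP L p r q y := by
    intro p q r y; unfold symP; ring
  rw [d2'_decomp L (fun p q r => d1 L a p q r) i j m n x,
      d2'_decomp L (fun p q r => d1 L a p q r) i j n m x,
      cd'_split L a hL ha i j m n x, cd'_split L a hL ha i j n m x,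
      leibniz (symP L) (tor L) (cont_symP hL) (cont_tor hL) a ha i j m n x,
      leibniz (symP L) (tor L) (cont_symP hL) (cont_tor hL) a ha i j n m x]
  have hR := ricci (symP L) (cont_symP hL) hsym a ha i j m n x
  simp only [d1_decomp, tt]
  simp only [mul_add, mul_sub, add_mul, sub_mul, Finset.mul_sum, Finset.sum_mul,
    Finset.sum_add_distrib, Finset.sum_sub_distrib]
  ring_nf
  ring_nf at hR
  have hanti : ∀ p q r y, tor L p q r y = -tor L p r q y := by
    intro p q r y; simp only [tor]; ring
  have q1 : ∑ α, cd' (symP L) (tor L) i α m n x * a α j x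
      = ∑ α, a α j x * cd' (symP L) (tor L) i α m n x :=
    sum_congr' _ _ fun α => mul_comm _ _
  have q3 : ∑ α, cd' (symP L) (tor L) α j m n x * a i α x
      = ∑ α, a i α x * cd' (symP L) (tor L) α j m n x :=
    sum_congr' _ _ fun α => mul_comm _ _
  have q8 : ∑ α, cd' (symP L) (tor L) i α n m x * a α j x
      = ∑ α, a α j x * cd' (symP L) (tor L) i α n m x :=
    sum_congr' _ _ fun α => mul_comm _ _
  have q9 : ∑ α, cd' (symP L) (tor L) α j n m x * a i α x
      = ∑ α, a i α x * cd' (symP L) (tor L) α j n m x :=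
    sum_congr' _ _ fun α => mul_comm _ _
  have q2 : ∑ α, 2 * tor L i α m x * cd (symP L) a α j n x
      = 2 * ∑ α, tor L i α m x * cd (symP L) a α j n x := by
    rw [Finset.mul_sum]; exact sum_congr' _ _ fun α => by ring
  have q4 : ∑ α, -2 * tor L α j m x * cd (symP L) a i α n x
      = -2 * ∑ α, tor L α j m x * cd (symP L) a i α n x := by
    rw [Finset.mul_sum]; exact sum_congr' _ _ fun α => by ring
  have q5 : ∑ α, 2 * tor L i α n x * cd (symP L) a α j m x
      = 2 * ∑ α, tor L i α n x * cd (symP L) a α j m x := by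
    rw [Finset.mul_sum]; exact sum_congr' _ _ fun α => by ring
  have q6 : ∑ α, 2 * tor L α j n x * cd (symP L) a i α m x
      = 2 * ∑ α, tor L α j n x * cd (symP L) a i α m x := by
    rw [Finset.mul_sum]; exact sum_congr' _ _ fun α => by ring
  have q7 : ∑ α, tor L α n m x * cd (symP L) a i j α x
      = -∑ α, tor L α m n x * cd (symP L) a i j α x := by
    rw [← Finset.sum_neg_distrib]
    exact sum_congr' _ _ fun α => by rw [hanti α n m x]; ring
  have q7b : ∑ α, 2 * tor L α m n x * cd (symP L) a i j α x
      = 2 * ∑ α, tor L α m n x * cd (symP L) a i j α x := by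
    rw [Finset.mul_sum]; exact sum_congr' _ _ fun α => by ring
  have c1 : ∑ α, ∑ β, tor L i α n x * tor L α β m x * a β j x
      = ∑ α, ∑ β, a α j x * tor L β α m x * tor L i β n x :=
    sum_comm_congr _ _ fun α β => by ring
  have c2 : ∑ α, ∑ β, tor L i α m x * tor L α β n x * a β j x
      = ∑ α, ∑ β, a α j x * tor L β α n x * tor L i β m x :=
    sum_comm_congr _ _ fun α β => by ring
  have c3 : ∑ α, ∑ β, tor L α j n x * tor L β α m x * a i β x
      = ∑ α, ∑ β, a i α x * tor L β j n x * tor L α β m x :=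
    sum_comm_congr _ _ fun α β => by ring
  have c4 : ∑ α, ∑ β, tor L α j m x * tor L β α n x * a i β x
      = ∑ α, ∑ β, a i α x * tor L β j m x * tor L α β n x :=
    sum_comm_congr _ _ fun α β => by ring
  have c5 : ∑ α, ∑ β, tor L α n m x * tor L i β α x * a β j x
      = -∑ α, ∑ β, tor L α m n x * tor L i β α x * a β j x := by
    rw [← Finset.sum_neg_distrib]
    refine sum_congr' _ _ fun α => ?_
    rw [← Finset.sum_neg_distrib]
    exact sum_congr' _ _ fun β => by rw [hanti α n m x]; ring
  have c6 : ∑ α, ∑ β, tor L α n m x * tor L β j α x * a i β x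
      = -∑ α, ∑ β, tor L α m n x * tor L β j α x * a i β x := by
    rw [← Finset.sum_neg_distrib]
    refine sum_congr' _ _ fun α => ?_
    rw [← Finset.sum_neg_distrib]
    exact sum_congr' _ _ fun β => by rw [hanti α n m x]; ring
  have e3 : ∑ α, ∑ β, a α j x * 2 * tor L i α β x * tor L β m n x
      = 2 * ∑ α, ∑ β, tor L α m n x * tor L i β α x * a β j x := by
    rw [Finset.mul_sum]
    simp only [Finset.mul_sum]
    exact sum_comm_congr _ _ fun α β => by ring
  have e6 : ∑ α, ∑ β, a i α x * 2 * tor L α j β x * tor L β m n x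
      = 2 * ∑ α, ∑ β, tor L α m n x * tor L β j α x * a i β x := by
    rw [Finset.mul_sum]
    simp only [Finset.mul_sum]
    exact sum_comm_congr _ _ fun α β => by ring
  have c7 : ∑ α, ∑ β, tor L α j n x * tor L i β m x * a β α x
      = ∑ α, ∑ β, tor L i α m x * tor L β j n x * a α β x :=
    sum_comm_congr _ _ fun α β => by ring
  have c8 : ∑ α, ∑ β, tor L α j m x * tor L i β n x * a β α x
      = ∑ α, ∑ β, tor L i α n x * tor L β j m x * a α β x :=
    sum_comm_congr _ _ fun α β => by ring
  linear_combination (norm := ring_nf) hR + q1 - q3 - q8 + q9 - q2 - q4 + q5 - q6 - q7 - q7b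
    - c1 + c2 - c3 + c4 - c5 - e3 + c6 + e6 + c7 - c8

/-- Mixed Ricci-type identity combining the first and second kind covariant
derivatives. -/
theorem stmt11 {N : ℕ} (L : Fin N → Fin N → Fin N → (Fin N → ℝ) → ℝ)
    (hL : ∀ i j k, ContDiff ℝ (⊤ : ℕ∞) (L i j k))
    (a : Fin N → Fin N → (Fin N → ℝ) → ℝ) (ha : ∀ i j, ContDiff ℝ (⊤ : ℕ∞) (a i j))
    (i j m n : Fin N) (x : Fin N → ℝ) :
    d2' L (fun i j m => d1 L a i j m) i j m n x
      - d2' L (fun i j m => d1 L a i j m) i j n m x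
    = -2 * (∑ α, tor L α j m x * cd (symP L) a i α n x)
      + 2 * (∑ α, tor L α j n x * cd (symP L) a i α m x)
      + 2 * (∑ α, tor L α m n x * cd (symP L) a i j α x)
      - 2 * (∑ α, tor L i α n x * cd (symP L) a α j m x)
      + 2 * (∑ α, tor L i α m x * cd (symP L) a α j n x)
      + (∑ α, a α j x *
          (curv (symP L) i α m n x
            + cd' (symP L) (tor L) i α m n x - cd' (symP L) (tor L) i α n m x
            - (∑ β, tor L β α m x * tor L i β n x)
            + (∑ β, tor L β α n x * tor L i β m x)
            + 2 * (∑ β, tor L i α β x * tor L β m n x)))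
      - (∑ α, a i α x *
          (curv (symP L) α j m n x
            + cd' (symP L) (tor L) α j m n x - cd' (symP L) (tor L) α j n m x
            - (∑ β, tor L β j m x * tor L α β n x)
            + (∑ β, tor L β j n x * tor L α β m x)
            + 2 * (∑ β, tor L α j β x * tor L β m n x))) := by
  exact stmt11' L hL a ha i j m n x
end
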